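/- arXiv:2109.01416 — 2 statements merged into one kernel-verified Lean document; each statement's English description precedes it below -/
import Mathlib

section
/- Let T₀ = (4π)^{6/5}·R₂²·R₁^{2/5}/(ε^{4/5}·C₀^{6/5}·μ). Then k₂(T₀) = k₁, and for every T > T₀ one has k₂(T) < k₁, i.e. the inertial range [k₁, k₂(T)] is empty for all times T exceeding the maximal time T₀. -/
open MeasureTheory Real Set

noncomputable section

/-- The maximal time `T₀`: `k₂(T₀) = k₁` and `k₂(T) < k₁` for every `T > T₀`. -/
theorem stmt_9
    (C0 ε μ R1 R2 : ℝ) (hC0 : 0 < C0) (hε : 0 < ε) (hμ : 0 < μ) (hR1 : 0 < R1) (hR2 : 0 < R2)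
    (k1 : ℝ)
    (hk1 : k1 = C0 ^ ((3:ℝ)/5) * ε ^ ((2:ℝ)/5) / (4 * π * R1 ^ 2) ^ ((3:ℝ)/5))
    (k2 : ℝ → ℝ)
    (hk2 : ∀ T > (0:ℝ), k2 T = (4 * π * R2 ^ 2 / (μ * T * C0 * ε ^ ((2:ℝ)/3))) ^ (3:ℕ))
    (T0 : ℝ)
    (hT0 : T0 = (4 * π) ^ ((6:ℝ)/5) * R2 ^ 2 * R1 ^ ((2:ℝ)/5)
      / (ε ^ ((4:ℝ)/5) * C0 ^ ((6:ℝ)/5) * μ)) :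
    k2 T0 = k1 ∧ ∀ T > T0, k2 T < k1 := by
  have hπ : (0:ℝ) < π := Real.pi_pos
  have hT0pos : 0 < T0 := by rw [hT0]; positivity
  set c : ℝ := 4 * π * R2 ^ 2 / (μ * C0 * ε ^ ((2:ℝ)/3)) with hc
  have hcpos : 0 < c := by rw [hc]; positivity
  have hkey : ∀ T > (0:ℝ), k2 T = (c / T) ^ (3:ℕ) := by
    intro T hT
    rw [hk2 T hT]
    congr 1
    rw [hc]
    field_simp
  have hk1pos : 0 < k1 := by rw [hk1]; positivity
  -- log computations
  have lc : Real.log c = Real.log (4*π) + 2 * Real.log R2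
      - (Real.log μ + Real.log C0 + (2/3) * Real.log ε) := by
    rw [hc, Real.log_div (by positivity) (by positivity),
      Real.log_mul (by positivity) (by positivity),
      Real.log_mul (by positivity) (by positivity),
      Real.log_mul (by positivity) (by positivity),
      Real.log_mul (by positivity) (by positivity),
      Real.log_pow, Real.log_rpow hε]
    push_cast; ring
  have lT0 : Real.log T0 = (6/5) * Real.log (4*π) + 2 * Real.log R2 + (2/5) * Real.log R1
      - ((4/5) * Real.log ε + (6/5) * Real.log C0 + Real.log μ) := by
    rw [hT0, Real.log_div (by positivity) (by positivity),
      Real.log_mul (by positivity) (by positivity),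
      Real.log_mul (by positivity) (by positivity),
      Real.log_mul (by positivity) (by positivity),
      Real.log_mul (by positivity) (by positivity),
      Real.log_pow, Real.log_rpow (by positivity : (0:ℝ) < 4*π),
      Real.log_rpow hR1, Real.log_rpow hε, Real.log_rpow hC0]
    push_cast; ring
  have lk1 : Real.log k1 = (3/5) * Real.log C0 + (2/5) * Real.log ε
      - (3/5) * (Real.log (4*π) + 2 * Real.log R1) := by
    rw [hk1, Real.log_div (by positivity) (by positivity),
      Real.log_mul (by positivity) (by positivity),
      Real.log_rpow hC0, Real.log_rpow hε,
      Real.log_rpow (by positivity : (0:ℝ) < 4*π*R1^2),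
      Real.log_mul (by positivity) (by positivity), Real.log_pow]
    push_cast; ring
  have hbasepos : 0 < (c / T0) ^ (3:ℕ) := by positivity
  have hlog : Real.log ((c / T0) ^ (3:ℕ)) = Real.log k1 := by
    rw [Real.log_pow, Real.log_div (ne_of_gt hcpos) (ne_of_gt hT0pos), lc, lT0, lk1]
    push_cast; ring
  have h1 : k2 T0 = k1 := by
    rw [hkey T0 hT0pos, ← Real.exp_log hbasepos, hlog, Real.exp_log hk1pos]
  refine ⟨h1, fun T hT => ?_⟩
  have hTpos : 0 < T := hT0pos.trans hT
  rw [hkey T hTpos, ← h1, hkey T0 hT0pos]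
  exact pow_lt_pow_left₀ (div_lt_div_of_pos_left hcpos hT0pos hT)
    (le_of_lt (by positivity)) (by norm_num)
end
end

section
/- Let û ∈ L²(ℝ³;ℂ³) satisfy ξ·û(ξ) = 0 for almost every ξ. Then |∫_{ℝ³} χ̂_k(ξ)² ⟨Π_ξ(∫_{ℝ³}(û(ξ−ζ)·ζ)·û(ζ) dζ), û(ξ)⟩ dξ| ≤ (3/2)·|k|·(2δ)^{3/2}·‖χ̂_k·û‖_{L²}·‖û‖²_{L²}, where ⟨·,·⟩ denotes the Hermitian inner product on ℂ³. -/
/-!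
Applying the divergence-free condition at `ξ - ζ` replaces `(û(ξ - ζ)·ζ)` by `(û(ξ - ζ)·ξ)` in
the inner integral, which is therefore bounded by `|ξ| ‖û‖²` (`ab ≤ (a² + b²)/2` in `ζ`, together
with translation invariance of Lebesgue measure). `Π_ξ` is an orthogonal projection, hence a
contraction, and `|ξ| ≤ 3|k|/2` on the support of `χ̂_k`. What is left is `∫ χ̂_k (χ̂_k |û|)`,
and Cauchy–Schwarz with `‖χ̂_k‖₂² ≤ |cube| = (2δ)³` finishes the proof.
-/

open MeasureTheory Real Set

noncomputable section

/-- Bilinear dot product of a real vector with a complex vector. -/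
def rdot (ξ : EuclideanSpace ℝ (Fin 3)) (z : EuclideanSpace ℂ (Fin 3)) : ℂ :=
  ∑ i, (ξ i : ℂ) * z i

/-- The Fourier-side Leray projection `Π_ξ z = z - (z·ξ) ξ / |ξ|²`. -/
def fproj (ξ : EuclideanSpace ℝ (Fin 3)) (z : EuclideanSpace ℂ (Fin 3)) :
    EuclideanSpace ℂ (Fin 3) :=
  z - (rdot ξ z / ((‖ξ‖ : ℂ) ^ 2)) • (EuclideanSpace.equiv (Fin 3) ℂ).symm (fun i => (ξ i : ℂ))

def toComplex (ξ : EuclideanSpace ℝ (Fin 3)) : EuclideanSpace ℂ (Fin 3) :=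
  WithLp.toLp 2 fun i => (ξ i : ℂ)

@[simp]
lemma toComplex_apply (ξ : EuclideanSpace ℝ (Fin 3)) (i : Fin 3) : toComplex ξ i = ξ i := rfl

lemma norm_toComplex (ξ : EuclideanSpace ℝ (Fin 3)) : ‖toComplex ξ‖ = ‖ξ‖ := by
  simp only [EuclideanSpace.norm_eq, toComplex_apply, Complex.norm_real]

lemma rdot_eq_inner (ξ : EuclideanSpace ℝ (Fin 3)) (z : EuclideanSpace ℂ (Fin 3)) :
    rdot ξ z = inner ℂ (toComplex ξ) z := by
  simp [rdot, PiLp.inner_apply, mul_comm]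

lemma norm_rdot_le (ξ : EuclideanSpace ℝ (Fin 3)) (z : EuclideanSpace ℂ (Fin 3)) :
    ‖rdot ξ z‖ ≤ ‖ξ‖ * ‖z‖ := by
  simpa only [rdot_eq_inner, norm_toComplex] using norm_inner_le_norm (𝕜 := ℂ) (toComplex ξ) z

lemma rdot_sub_left (ξ ζ : EuclideanSpace ℝ (Fin 3)) (z : EuclideanSpace ℂ (Fin 3)) :
    rdot (ξ - ζ) z = rdot ξ z - rdot ζ z := by
  simp only [rdot, PiLp.sub_apply, Complex.ofReal_sub, sub_mul, Finset.sum_sub_distrib]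

lemma fproj_eq_starProjection (ξ : EuclideanSpace ℝ (Fin 3)) (z : EuclideanSpace ℂ (Fin 3)) :
    fproj ξ z = (ℂ ∙ toComplex ξ)ᗮ.starProjection z := by
  rw [Submodule.starProjection_orthogonal_val, Submodule.starProjection_singleton, norm_toComplex,
    ← rdot_eq_inner]
  norm_num [fproj, toComplex]

lemma norm_fproj_le (ξ : EuclideanSpace ℝ (Fin 3)) (z : EuclideanSpace ℂ (Fin 3)) :
    ‖fproj ξ z‖ ≤ ‖z‖ := by
  rw [fproj_eq_starProjection]
  exact Submodule.norm_starProjection_apply_le _ z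

section ConvolutionBound

variable {G E : Type*} [AddGroup G] [MeasurableSpace G] [MeasurableAdd G] [MeasurableNeg G]
  [NormedAddCommGroup E] {μ : Measure G} [μ.IsAddLeftInvariant] [μ.IsNegInvariant] {f : G → E}

lemma MeasureTheory.MemLp.comp_sub_left {p : ENNReal} (hf : MemLp f p μ) (x : G) :
    MemLp (fun y => f (x - y)) p μ :=
  hf.comp_measurePreserving (Measure.measurePreserving_sub_left μ x)

lemma integrable_norm_comp_sub_left_mul_norm (hf : MemLp f 2 μ) (x : G) :
    Integrable (fun y => ‖f (x - y)‖ * ‖f y‖) μ :=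
  (hf.comp_sub_left x).norm.integrable_mul hf.norm

lemma integral_norm_comp_sub_left_mul_norm_le (hf : MemLp f 2 μ) (x : G) :
    ∫ y, ‖f (x - y)‖ * ‖f y‖ ∂μ ≤ ∫ y, ‖f y‖ ^ 2 ∂μ := by
  have hsq : Integrable (fun y => ‖f y‖ ^ 2) μ := hf.integrable_norm_pow two_ne_zero
  have hsq_shift : Integrable (fun y => ‖f (x - y)‖ ^ 2) μ :=
    (hf.comp_sub_left x).integrable_norm_pow two_ne_zero
  calc ∫ y, ‖f (x - y)‖ * ‖f y‖ ∂μ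
      ≤ ∫ y, (‖f (x - y)‖ ^ 2 + ‖f y‖ ^ 2) / 2 ∂μ :=
        integral_mono (integrable_norm_comp_sub_left_mul_norm hf x)
          ((hsq_shift.add hsq).div_const 2) fun y => by
            nlinarith [sq_nonneg (‖f (x - y)‖ - ‖f y‖)]
    _ = ∫ y, ‖f y‖ ^ 2 ∂μ := by
        rw [integral_div, integral_add hsq_shift hsq,
          integral_sub_left_eq_self (fun y => ‖f y‖ ^ 2) μ x]
        ring

end ConvolutionBound

lemma integral_mul_le_of_memLp_two {α : Type*} [MeasurableSpace α] {μ : Measure α} {f g : α → ℝ}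
    (hf0 : ∀ x, 0 ≤ f x) (hg0 : ∀ x, 0 ≤ g x) (hf : MemLp f 2 μ) (hg : MemLp g 2 μ) :
    ∫ x, f x * g x ∂μ ≤ (∫ x, f x ^ 2 ∂μ) ^ (1 / 2 : ℝ) * (∫ x, g x ^ 2 ∂μ) ^ (1 / 2 : ℝ) := by
  have h := integral_mul_le_Lp_mul_Lq_of_nonneg Real.HolderConjugate.two_two
    (ae_of_all μ hf0) (ae_of_all μ hg0) (by rwa [ENNReal.ofReal_ofNat])
    (by rwa [ENNReal.ofReal_ofNat])
  simpa only [rpow_two] using h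

section Cutoff

variable {α : Type*} {χ : α → ℝ} {K : Set α}

lemma le_indicator_one_of_support_subset (h01 : ∀ x, χ x ∈ Icc 0 1)
    (hsupp : Function.support χ ⊆ K) (x : α) : χ x ≤ K.indicator 1 x := by
  by_cases hx : χ x = 0
  · rw [hx]
    exact indicator_nonneg (fun _ _ => zero_le_one) x
  · rw [indicator_of_mem (hsupp hx)]
    exact (h01 x).2

variable [MeasurableSpace α] {μ : Measure α}

lemma memLp_of_support_subset {p : ENNReal} (hχ : AEStronglyMeasurable χ μ)
    (h01 : ∀ x, χ x ∈ Icc 0 1) (hsupp : Function.support χ ⊆ K) (hK : MeasurableSet K)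
    (hμK : μ K ≠ ⊤) : MemLp χ p μ := by
  refine (memLp_indicator_const p hK (1 : ℝ) (Or.inr hμK)).of_le hχ (ae_of_all _ fun x => ?_)
  rw [norm_of_nonneg (h01 x).1, norm_of_nonneg (indicator_nonneg (fun _ _ => zero_le_one) x)]
  exact le_indicator_one_of_support_subset h01 hsupp x

lemma integral_sq_le_measureReal_of_support_subset (h01 : ∀ x, χ x ∈ Icc 0 1)
    (hsupp : Function.support χ ⊆ K) (hK : MeasurableSet K) (hμK : μ K ≠ ⊤) :
    ∫ x, χ x ^ 2 ∂μ ≤ μ.real K := by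
  rw [← integral_indicator_one hK]
  refine integral_mono_of_nonneg (ae_of_all _ fun x => sq_nonneg _)
    ((integrable_indicator_iff hK).2 (integrableOn_const hμK)) (ae_of_all _ fun x => ?_)
  calc χ x ^ 2 ≤ χ x := by obtain ⟨h0, h1⟩ := h01 x; nlinarith
    _ ≤ K.indicator 1 x := le_indicator_one_of_support_subset h01 hsupp x

lemma integral_mul_le_of_support_subset (hχ : AEStronglyMeasurable χ μ)
    (h01 : ∀ x, χ x ∈ Icc 0 1) (hsupp : Function.support χ ⊆ K) (hK : MeasurableSet K)
    (hμK : μ K ≠ ⊤) {g : α → ℝ} (hg0 : ∀ x, 0 ≤ g x) (hg : MemLp g 2 μ) :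
    ∫ x, χ x * g x ∂μ ≤ μ.real K ^ (1 / 2 : ℝ) * (∫ x, g x ^ 2 ∂μ) ^ (1 / 2 : ℝ) := by
  refine (integral_mul_le_of_memLp_two (fun x => (h01 x).1) hg0
    (memLp_of_support_subset hχ h01 hsupp hK hμK) hg).trans ?_
  gcongr
  exact integral_sq_le_measureReal_of_support_subset h01 hsupp hK hμK

end Cutoff

namespace EuclideanSpace

variable {ι : Type*} [Fintype ι] (k : EuclideanSpace ℝ ι)

lemma setOf_forall_abs_sub_le_eq_preimage {δ : ℝ} (hδ : 0 ≤ δ) :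
    {ξ : EuclideanSpace ℝ ι | ∀ i, |ξ i - k i| ≤ δ} =
      WithLp.ofLp ⁻¹' Metric.closedBall (WithLp.ofLp k) δ := by
  ext ξ
  simp [dist_pi_le_iff hδ, Real.dist_eq]

lemma measurableSet_setOf_forall_abs_sub_le (δ : ℝ) :
    MeasurableSet {ξ : EuclideanSpace ℝ ι | ∀ i, |ξ i - k i| ≤ δ} := by
  simp only [ofPred_forall]
  exact MeasurableSet.iInter fun i => measurableSet_le (by fun_prop) measurable_const

lemma volume_setOf_forall_abs_sub_le {δ : ℝ} (hδ : 0 ≤ δ) :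
    volume {ξ : EuclideanSpace ℝ ι | ∀ i, |ξ i - k i| ≤ δ} =
      ENNReal.ofReal ((2 * δ) ^ Fintype.card ι) := by
  rw [setOf_forall_abs_sub_le_eq_preimage k hδ, (PiLp.volume_preserving_ofLp ι).measure_preimage
    measurableSet_closedBall.nullMeasurableSet, Real.volume_pi_closedBall _ hδ]

lemma measureReal_setOf_forall_abs_sub_le {δ : ℝ} (hδ : 0 ≤ δ) :
    volume.real {ξ : EuclideanSpace ℝ ι | ∀ i, |ξ i - k i| ≤ δ} = (2 * δ) ^ Fintype.card ι := by
  rw [measureReal_def, volume_setOf_forall_abs_sub_le k hδ, ENNReal.toReal_ofReal (by positivity)]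

end EuclideanSpace

lemma norm_integral_rdot_smul_le {u : EuclideanSpace ℝ (Fin 3) → EuclideanSpace ℂ (Fin 3)}
    (hu : MemLp u 2 volume) (hdiv : ∀ᵐ ξ, rdot ξ (u ξ) = 0) (ξ : EuclideanSpace ℝ (Fin 3)) :
    ‖∫ ζ, rdot ζ (u (ξ - ζ)) • u ζ‖ ≤ ‖ξ‖ * ∫ ζ, ‖u ζ‖ ^ 2 := by
  have hdiv_shift : ∀ᵐ ζ, rdot ζ (u (ξ - ζ)) = rdot ξ (u (ξ - ζ)) := by
    filter_upwards [(Measure.measurePreserving_sub_left volume ξ).quasiMeasurePreserving.ae hdiv]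
      with ζ hζ
    rwa [rdot_sub_left, sub_eq_zero, eq_comm] at hζ
  have hbound : ∀ᵐ ζ, ‖rdot ζ (u (ξ - ζ)) • u ζ‖ ≤ ‖ξ‖ * (‖u (ξ - ζ)‖ * ‖u ζ‖) := by
    filter_upwards [hdiv_shift] with ζ hζ
    rw [hζ, norm_smul, ← mul_assoc]
    gcongr
    exact norm_rdot_le ξ _
  calc ‖∫ ζ, rdot ζ (u (ξ - ζ)) • u ζ‖
      ≤ ∫ ζ, ‖ξ‖ * (‖u (ξ - ζ)‖ * ‖u ζ‖) :=
        norm_integral_le_of_norm_le ((integrable_norm_comp_sub_left_mul_norm hu ξ).const_mul _)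
          hbound
    _ ≤ ‖ξ‖ * ∫ ζ, ‖u ζ‖ ^ 2 := by
        rw [integral_const_mul]
        exact mul_le_mul_of_nonneg_left (integral_norm_comp_sub_left_mul_norm_le hu ξ)
          (norm_nonneg ξ)

lemma norm_inner_fproj_integral_rdot_smul_le
    {u : EuclideanSpace ℝ (Fin 3) → EuclideanSpace ℂ (Fin 3)}
    (hu : MemLp u 2 volume) (hdiv : ∀ᵐ ξ, rdot ξ (u ξ) = 0) (ξ : EuclideanSpace ℝ (Fin 3)) :
    ‖inner ℂ (fproj ξ (∫ ζ, rdot ζ (u (ξ - ζ)) • u ζ)) (u ξ)‖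
      ≤ ‖ξ‖ * (∫ ζ, ‖u ζ‖ ^ 2) * ‖u ξ‖ := by
  calc _ ≤ ‖fproj ξ (∫ ζ, rdot ζ (u (ξ - ζ)) • u ζ)‖ * ‖u ξ‖ := norm_inner_le_norm _ _
    _ ≤ _ := by
        gcongr
        exact (norm_fproj_le _ _).trans (norm_integral_rdot_smul_le hu hdiv ξ)

lemma norm_sq_mul_inner_fproj_le {u : EuclideanSpace ℝ (Fin 3) → EuclideanSpace ℂ (Fin 3)}
    (hu : MemLp u 2 volume) (hdiv : ∀ᵐ ξ, rdot ξ (u ξ) = 0) {ξ : EuclideanSpace ℝ (Fin 3)}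
    {c R : ℝ} (hc : 0 ≤ c) (hR : c ≠ 0 → ‖ξ‖ ≤ R) :
    ‖(c : ℂ) ^ 2 * inner ℂ (fproj ξ (∫ ζ, rdot ζ (u (ξ - ζ)) • u ζ)) (u ξ)‖
      ≤ R * (∫ ζ, ‖u ζ‖ ^ 2) * (c * (c * ‖u ξ‖)) := by
  rcases eq_or_ne c 0 with rfl | hc0
  · simp
  rw [norm_mul, norm_pow, Complex.norm_real, norm_of_nonneg hc]
  calc _ ≤ c ^ 2 * (‖ξ‖ * (∫ ζ, ‖u ζ‖ ^ 2) * ‖u ξ‖) := by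
        gcongr
        exact norm_inner_fproj_integral_rdot_smul_le hu hdiv ξ
    _ ≤ c ^ 2 * (R * (∫ ζ, ‖u ζ‖ ^ 2) * ‖u ξ‖) := by
        gcongr
        exact hR hc0
    _ = _ := by ring

theorem stmt_11_general
    (k : EuclideanSpace ℝ (Fin 3))
    (δ : ℝ) (hδ0 : 0 < δ)
    (χ : EuclideanSpace ℝ (Fin 3) → ℝ) (hχmeas : Measurable χ)
    (hχ01 : ∀ ξ, χ ξ ∈ Set.Icc (0:ℝ) 1)
    (hχsupp : ∀ ξ, χ ξ ≠ 0 → ∀ i, |ξ i - k i| ≤ δ)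
    (hχann : ∀ ξ, χ ξ ≠ 0 → ‖k‖ / 2 ≤ ‖ξ‖ ∧ ‖ξ‖ ≤ 3 / 2 * ‖k‖)
    (u : EuclideanSpace ℝ (Fin 3) → EuclideanSpace ℂ (Fin 3))
    (hu : MemLp u 2 volume)
    (hdiv : ∀ᵐ ξ, rdot ξ (u ξ) = 0) :
    ‖∫ ξ, ((χ ξ : ℂ) ^ 2
        * (inner ℂ (fproj ξ (∫ ζ, rdot ζ (u (ξ - ζ)) • u ζ)) (u ξ) : ℂ))‖
      ≤ 3 / 2 * ‖k‖ * (2 * δ) ^ ((3:ℝ)/2)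
        * (∫ ξ, (χ ξ * ‖u ξ‖) ^ 2) ^ ((1:ℝ)/2) * (∫ ξ, ‖u ξ‖ ^ 2) := by
  set M := ∫ ξ, ‖u ξ‖ ^ 2
  set K := {ξ : EuclideanSpace ℝ (Fin 3) | ∀ i, |ξ i - k i| ≤ δ}
  have hsupp : Function.support χ ⊆ K := fun ξ hξ => hχsupp ξ hξ
  have hK := EuclideanSpace.measurableSet_setOf_forall_abs_sub_le k δ
  have hKfin : volume K ≠ ⊤ :=
    (EuclideanSpace.volume_setOf_forall_abs_sub_le k hδ0.le).trans_ne ENNReal.ofReal_ne_top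
  have hχ (p) : MemLp χ p volume :=
    memLp_of_support_subset hχmeas.aestronglyMeasurable hχ01 hsupp hK hKfin
  have hχu : MemLp (fun ξ => χ ξ * ‖u ξ‖) 2 volume := hu.norm.mul' (hχ ⊤)
  calc _ ≤ ∫ ξ, 3 / 2 * ‖k‖ * M * (χ ξ * (χ ξ * ‖u ξ‖)) :=
        norm_integral_le_of_norm_le (((hχ 2).integrable_mul hχu).const_mul _) <|
          ae_of_all _ fun ξ => norm_sq_mul_inner_fproj_le hu hdiv (hχ01 ξ).1 fun h => (hχann ξ h).2
    _ = 3 / 2 * ‖k‖ * M * ∫ ξ, χ ξ * (χ ξ * ‖u ξ‖) := integral_const_mul _ _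
    _ ≤ 3 / 2 * ‖k‖ * M
          * (volume.real K ^ (1 / 2 : ℝ) * (∫ ξ, (χ ξ * ‖u ξ‖) ^ 2) ^ (1 / 2 : ℝ)) := by
        gcongr
        exact integral_mul_le_of_support_subset hχmeas.aestronglyMeasurable hχ01 hsupp hK hKfin
          (fun ξ => mul_nonneg (hχ01 ξ).1 (norm_nonneg _)) hχu
    _ = _ := by
        rw [EuclideanSpace.measureReal_setOf_forall_abs_sub_le k hδ0.le, Fintype.card_fin,
          ← rpow_natCast, ← rpow_mul (by positivity)]
        norm_num
        ring

/-- The estimate for the trilinear term `I₃` in the proof of Lemma 2.9. -/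
theorem stmt_11
    (k : EuclideanSpace ℝ (Fin 3)) (hk : k ≠ 0)
    (δ : ℝ) (hδ0 : 0 < δ) (hδ : δ < ‖k‖ / (2 * Real.sqrt 3))
    (χ : EuclideanSpace ℝ (Fin 3) → ℝ) (hχmeas : Measurable χ)
    (hχ01 : ∀ ξ, χ ξ ∈ Set.Icc (0:ℝ) 1)
    (hχsupp : ∀ ξ, χ ξ ≠ 0 → ∀ i, |ξ i - k i| ≤ δ)
    (hχann : ∀ ξ, χ ξ ≠ 0 → ‖k‖ / 2 ≤ ‖ξ‖ ∧ ‖ξ‖ ≤ 3 / 2 * ‖k‖)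
    (u : EuclideanSpace ℝ (Fin 3) → EuclideanSpace ℂ (Fin 3))
    (hu : MemLp u 2 volume)
    (hdiv : ∀ᵐ ξ, rdot ξ (u ξ) = 0) :
    ‖∫ ξ, ((χ ξ : ℂ) ^ 2
        * (inner ℂ (fproj ξ (∫ ζ, rdot ζ (u (ξ - ζ)) • u ζ)) (u ξ) : ℂ))‖
      ≤ 3 / 2 * ‖k‖ * (2 * δ) ^ ((3:ℝ)/2)
        * (∫ ξ, (χ ξ * ‖u ξ‖) ^ 2) ^ ((1:ℝ)/2) * (∫ ξ, ‖u ξ‖ ^ 2) :=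
  stmt_11_general k δ hδ0 χ hχmeas hχ01 hχsupp hχann u hu hdiv
end
end
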